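/- For the ship kinematics, the reachable set transforms under SE(2): for f(η, ν, v_c) = R(θ)ν + v_c, every η_α = (N_α, E_α, θ_α) ∈ ℝ³ with R_α := R(θ_α), every compact X₀ ⊂ ℝ³, every measurable control signal ν : ℝ_{≥0} → ℝ³, every compact disturbance set W ⊆ ℝ³, and every interval [t₀, t₁] ⊂ ℝ_{≥0}: R_αᵀ(Reach(X₀, ν, W; [t₀,t₁]) − η_α) = Reach(R_αᵀ(X₀ − η_α), ν, R_αᵀ W; [t₀,t₁]), where for a set S, R_αᵀ(S − η_α) := { R_αᵀ(s − η_α) : s ∈ S } and R_αᵀ W := { R_αᵀ w : w ∈ W }. -/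
import Mathlib


open Matrix MeasureTheory Set

/-- The rotation matrix `R(θ)` with rows `(cos θ, −sin θ, 0)`, `(sin θ, cos θ, 0)`,
`(0, 0, 1)`. -/
noncomputable def shipR (θ : ℝ) : Matrix (Fin 3) (Fin 3) ℝ :=
  !![Real.cos θ, -Real.sin θ, 0;
     Real.sin θ, Real.cos θ, 0;
     0, 0, 1]

/-- The ship kinematics vector field `f(η, ν, v_c) = R(θ)·ν + v_c`, where `η = (N, E, θ)`. -/
noncomputable def shipf (η ν vc : Fin 3 → ℝ) : Fin 3 → ℝ :=
  (shipR (η 2)).mulVec ν + vc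

/-- The reachable set `Reach(X₀, ν, W; [t₀,t₁])` of the ship kinematics, whose (unique)
trajectories are given by the map `ξ`. -/
def shipReach
    (ξ : (Fin 3 → ℝ) → (ℝ → Fin 3 → ℝ) → (ℝ → Fin 3 → ℝ) → ℝ → (Fin 3 → ℝ))
    (X₀ : Set (Fin 3 → ℝ)) (ν : ℝ → Fin 3 → ℝ) (W : Set (Fin 3 → ℝ))
    (t₀ t₁ : ℝ) : Set (Fin 3 → ℝ) :=
  {y | ∃ η₀ ∈ X₀, ∃ t ∈ Icc t₀ t₁, ∃ vc : ℝ → Fin 3 → ℝ,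
    Measurable vc ∧ (∀ s, vc s ∈ W) ∧ y = ξ η₀ ν vc t}

lemma shipR_mul (a b : ℝ) : shipR a * shipR b = shipR (a + b) := by
  ext i j
  fin_cases i <;> fin_cases j <;>
    simp [shipR, Matrix.mul_apply, Fin.sum_univ_three, Real.cos_add, Real.sin_add] <;> ring

lemma shipR_transpose (θ : ℝ) : (shipR θ)ᵀ = shipR (-θ) := by
  ext i j
  rw [Matrix.transpose_apply]
  fin_cases i <;> fin_cases j <;> simp [shipR, Matrix.vecHead, Matrix.vecTail]

lemma shipR_zero : shipR 0 = 1 := by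
  ext i j
  fin_cases i <;> fin_cases j <;> simp [shipR, Matrix.one_apply, Matrix.vecHead, Matrix.vecTail]

lemma shipR_mulVec_two (θ : ℝ) (v : Fin 3 → ℝ) : (shipR θ).mulVec v 2 = v 2 := by
  simp [shipR, Matrix.mulVec, dotProduct, Fin.sum_univ_three]

noncomputable def shipCLE (θ : ℝ) : (Fin 3 → ℝ) ≃L[ℝ] (Fin 3 → ℝ) :=
  LinearEquiv.toContinuousLinearEquiv <|
    LinearEquiv.ofLinear (Matrix.mulVecLin (shipR θ)) (Matrix.mulVecLin (shipR (-θ)))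
      (by rw [← Matrix.mulVecLin_mul, shipR_mul, add_neg_cancel, shipR_zero, Matrix.mulVecLin_one])
      (by rw [← Matrix.mulVecLin_mul, shipR_mul, neg_add_cancel, shipR_zero, Matrix.mulVecLin_one])

@[simp] lemma shipCLE_apply (θ : ℝ) (v : Fin 3 → ℝ) : shipCLE θ v = (shipR θ).mulVec v := rfl

lemma shipR_intervalIntegral (θ : ℝ) (f : ℝ → Fin 3 → ℝ) (a b : ℝ) :
    (∫ s in a..b, (shipR θ).mulVec (f s)) = (shipR θ).mulVec (∫ s in a..b, f s) := by
  have h1 := (shipCLE θ).integral_comp_comm (μ := volume.restrict (Set.Ioc a b)) f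
  have h2 := (shipCLE θ).integral_comp_comm (μ := volume.restrict (Set.Ioc b a)) f
  simp only [shipCLE_apply] at h1 h2
  simp only [intervalIntegral, h1, h2, Matrix.mulVec_sub]

lemma shipR_mulVec_cancel (θ : ℝ) (v : Fin 3 → ℝ) :
    (shipR θ).mulVec ((shipR (-θ)).mulVec v) = v := by
  rw [Matrix.mulVec_mulVec, shipR_mul, add_neg_cancel, shipR_zero, Matrix.one_mulVec]

lemma shipR_mulVec_cancel' (θ : ℝ) (v : Fin 3 → ℝ) :
    (shipR (-θ)).mulVec ((shipR θ).mulVec v) = v := by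
  rw [Matrix.mulVec_mulVec, shipR_mul, neg_add_cancel, shipR_zero, Matrix.one_mulVec]

lemma ship_equiv
    (ξ : (Fin 3 → ℝ) → (ℝ → Fin 3 → ℝ) → (ℝ → Fin 3 → ℝ) → ℝ → (Fin 3 → ℝ))
    (hξ0 : ∀ η₀ ν vc, ξ η₀ ν vc 0 = η₀)
    (hξsol : ∀ η₀ ν vc, ∀ t : ℝ, 0 ≤ t →
      ξ η₀ ν vc t = η₀ + ∫ s in (0 : ℝ)..t, shipf (ξ η₀ ν vc s) (ν s) (vc s))
    (hξuniq : ∀ (ν vc : ℝ → Fin 3 → ℝ) (η : ℝ → Fin 3 → ℝ),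
      (∀ t : ℝ, 0 ≤ t → η t = η 0 + ∫ s in (0 : ℝ)..t, shipf (η s) (ν s) (vc s)) →
      ∀ t : ℝ, 0 ≤ t → η t = ξ (η 0) ν vc t)
    (ηα : Fin 3 → ℝ) (ν vc : ℝ → Fin 3 → ℝ) (η₀ : Fin 3 → ℝ)
    (t : ℝ) (ht : 0 ≤ t) :
    (shipR (-(ηα 2))).mulVec (ξ η₀ ν vc t - ηα)
      = ξ ((shipR (-(ηα 2))).mulVec (η₀ - ηα)) ν
          (fun s => (shipR (-(ηα 2))).mulVec (vc s)) t := by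
  set θ := ηα 2 with hθ
  set η' : ℝ → Fin 3 → ℝ := fun t => (shipR (-θ)).mulVec (ξ η₀ ν vc t - ηα) with hη'
  have hpt : ∀ s : ℝ, (shipR (-θ)).mulVec (shipf (ξ η₀ ν vc s) (ν s) (vc s))
      = shipf (η' s) (ν s) ((shipR (-θ)).mulVec (vc s)) := by
    intro s
    have h2 : η' s 2 = ξ η₀ ν vc s 2 - θ := by
      simp [hη', shipR_mulVec_two, hθ]
    simp only [shipf, Matrix.mulVec_add, Matrix.mulVec_mulVec, shipR_mul, h2,
      neg_add_eq_sub]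
  have key : ∀ t : ℝ, 0 ≤ t →
      η' t = η' 0 + ∫ s in (0:ℝ)..t, shipf (η' s) (ν s) ((shipR (-θ)).mulVec (vc s)) := by
    intro t ht
    have h1 := hξsol η₀ ν vc t ht
    have h2 : η' t = η' 0 + (shipR (-θ)).mulVec
        (∫ s in (0:ℝ)..t, shipf (ξ η₀ ν vc s) (ν s) (vc s)) := by
      simp only [hη']
      rw [h1, hξ0, ← Matrix.mulVec_add]
      congr 1
      abel_nf
    rw [h2, ← shipR_intervalIntegral]
    congr 1
    exact intervalIntegral.integral_congr fun s _ => hpt s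
  have h0 : η' 0 = (shipR (-θ)).mulVec (η₀ - ηα) := by simp [hη', hξ0]
  have := hξuniq ν (fun s => (shipR (-θ)).mulVec (vc s)) η' key t ht
  rw [h0] at this
  exact this

/-- the reachable sets of the ship kinematics transform under SE(2): for
every `η_α = (N_α, E_α, θ_α)` with `R_α = R(θ_α)`, every compact `X₀ ⊂ ℝ³`, measurable
control signal `ν`, compact disturbance set `W ⊆ ℝ³`, and interval `[t₀,t₁] ⊆ ℝ≥0`:
`R_αᵀ(Reach(X₀, ν, W; [t₀,t₁]) − η_α) = Reach(R_αᵀ(X₀ − η_α), ν, R_αᵀ W; [t₀,t₁])`. -/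

theorem statement14
    -- `ξ` is the unique-trajectory map of the ship kinematics `η̇ = R(θ)ν + v_c`:
    (ξ : (Fin 3 → ℝ) → (ℝ → Fin 3 → ℝ) → (ℝ → Fin 3 → ℝ) → ℝ → (Fin 3 → ℝ))
    (hξ0 : ∀ η₀ ν vc, ξ η₀ ν vc 0 = η₀)
    (hξsol : ∀ η₀ ν vc, ∀ t : ℝ, 0 ≤ t →
      ξ η₀ ν vc t = η₀ + ∫ s in (0 : ℝ)..t, shipf (ξ η₀ ν vc s) (ν s) (vc s))
    (hξuniq : ∀ (ν vc : ℝ → Fin 3 → ℝ) (η : ℝ → Fin 3 → ℝ),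
      (∀ t : ℝ, 0 ≤ t → η t = η 0 + ∫ s in (0 : ℝ)..t, shipf (η s) (ν s) (vc s)) →
      ∀ t : ℝ, 0 ≤ t → η t = ξ (η 0) ν vc t)
    (ηα : Fin 3 → ℝ)
    (X₀ : Set (Fin 3 → ℝ)) (hX₀ : IsCompact X₀)
    (ν : ℝ → Fin 3 → ℝ) (hν : Measurable ν)
    (W : Set (Fin 3 → ℝ)) (hW : IsCompact W)
    (t₀ t₁ : ℝ) (ht₀ : 0 ≤ t₀) (ht₁ : t₀ ≤ t₁) :
    (fun y : Fin 3 → ℝ => (shipR (ηα 2))ᵀ.mulVec (y - ηα)) '' shipReach ξ X₀ ν W t₀ t₁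
      = shipReach ξ
          ((fun y : Fin 3 → ℝ => (shipR (ηα 2))ᵀ.mulVec (y - ηα)) '' X₀)
          ν
          ((fun y : Fin 3 → ℝ => (shipR (ηα 2))ᵀ.mulVec y) '' W)
          t₀ t₁ := by
  simp only [shipR_transpose]
  set θ := ηα 2 with hθ
  ext y
  constructor
  · rintro ⟨x, ⟨η₀, hη₀, t, htI, vc, hvcm, hvcW, rfl⟩, rfl⟩
    refine ⟨(shipR (-θ)).mulVec (η₀ - ηα), ⟨η₀, hη₀, rfl⟩, t, htI,
      fun s => (shipR (-θ)).mulVec (vc s),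
      (shipCLE (-θ)).continuous.measurable.comp hvcm,
      fun s => ⟨vc s, hvcW s, rfl⟩, ?_⟩
    show (shipR (-θ)).mulVec (ξ η₀ ν vc t - ηα) = _
    rw [hθ]
    exact ship_equiv ξ hξ0 hξsol hξuniq ηα ν vc η₀ t (ht₀.trans htI.1)
  · rintro ⟨_, ⟨η₀, hη₀, rfl⟩, t, htI, vc', hm', hW', rfl⟩
    set vc : ℝ → Fin 3 → ℝ := fun s => (shipR θ).mulVec (vc' s) with hvc
    have hvc' : vc' = fun s => (shipR (-θ)).mulVec (vc s) := by
      funext s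
      rw [hvc]
      exact (shipR_mulVec_cancel' θ (vc' s)).symm
    have hvcW : ∀ s, vc s ∈ W := by
      intro s
      obtain ⟨w, hw, hwe⟩ := hW' s
      have : vc s = w := by
        show (shipR θ).mulVec (vc' s) = w
        rw [← hwe]
        exact shipR_mulVec_cancel θ w
      rwa [this]
    refine ⟨ξ η₀ ν vc t, ⟨η₀, hη₀, t, htI, vc,
      (shipCLE θ).continuous.measurable.comp hm', hvcW, rfl⟩, ?_⟩
    rw [hvc']
    show (shipR (-θ)).mulVec (ξ η₀ ν vc t - ηα)
      = ξ ((shipR (-θ)).mulVec (η₀ - ηα)) ν (fun s => (shipR (-θ)).mulVec (vc s)) t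
    rw [hθ]
    exact ship_equiv ξ hξ0 hξsol hξuniq ηα ν vc η₀ t (ht₀.trans htI.1)
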